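/- arXiv:2604.27211 — 3 statements merged into one kernel-verified Lean document; each statement's English description precedes it below -/
import Mathlib

section
/- For any additive valuation v over goods M, any n, and any subset S ⊆ M of size r ≤ n, the value of the remaining goods satisfies v(M \ S) ≥ (n − r) · TPS_n(v, M). -/
open Finset

variable {α : Type*} [DecidableEq α]

/-- A highest-value good of `S` according to `v` (arbitrary if `S` is empty). -/
noncomputable def bestGood [Nonempty α] (v : α → ℝ) (S : Finset α) : α :=
  if h : S.Nonempty then (S.exists_max_image v h).choose else Classical.arbitrary α

/-- The truncated proportional share `TPS_n(v, S)`, defined recursively by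
`TPS_n(v,S) = min(v(S)/n, TPS_{n-1}(v, S \ {b}))` for `b` a highest-value good,
with `TPS_1(v,S) = v(S)`. -/
noncomputable def TPS [Nonempty α] (v : α → ℝ) : ℕ → Finset α → ℝ
  | 0, S => ∑ x ∈ S, v x
  | 1, S => ∑ x ∈ S, v x
  | (n+2), S =>
      min ((∑ x ∈ S, v x) / ((n + 2 : ℕ) : ℝ)) (TPS v (n+1) (S.erase (bestGood v S)))

lemma best_mem [Nonempty α] (v : α → ℝ) {S : Finset α} (h : S.Nonempty) :
    bestGood v S ∈ S := by
  rw [bestGood, dif_pos h]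
  exact (S.exists_max_image v h).choose_spec.1

lemma best_le [Nonempty α] (v : α → ℝ) {S : Finset α} {a : α} (ha : a ∈ S) :
    v a ≤ v (bestGood v S) := by
  have h : S.Nonempty := ⟨a, ha⟩
  rw [bestGood, dif_pos h]
  exact (S.exists_max_image v h).choose_spec.2 a ha

lemma map_erase_val (v : α → ℝ) {S : Finset α} {b : α} (hb : b ∈ S) :
    (S.erase b).val.map v = (S.val.map v).erase (v b) := by
  have hb' : b ∈ S.val := hb
  rw [Finset.erase_val]
  conv_rhs => rw [← Multiset.cons_erase hb']
  rw [Multiset.map_cons, Multiset.erase_cons_head]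

lemma tps_congr [Nonempty α] (v : α → ℝ) :
    ∀ n (S T : Finset α), S.val.map v = T.val.map v → TPS v n S = TPS v n T := by
  intro n
  induction n using Nat.strong_induction_on with
  | _ n ih =>
    intro S T h
    have hsum : ∑ x ∈ S, v x = ∑ x ∈ T, v x := by
      show (S.val.map v).sum = (T.val.map v).sum
      rw [h]
    match n with
    | 0 => simpa only [TPS] using hsum
    | 1 => simpa only [TPS] using hsum
    | n + 2 =>
      simp only [TPS, hsum]
      congr 1
      apply ih (n+1) (by omega)
      rcases eq_or_ne S ∅ with hS | hS
      · subst hS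
        have hT : T = ∅ := by
          have : T.val.map v = 0 := by rw [← h]; simp
          have := Multiset.eq_zero_of_forall_notMem (s := T.val) ?_
          · ext a; simp [Finset.mem_def, this]
          · intro a ha
            have : v a ∈ T.val.map v := Multiset.mem_map_of_mem v ha
            rw [‹T.val.map v = 0›] at this
            simp at this
        subst hT
        simp
      · have hSne : S.Nonempty := Finset.nonempty_iff_ne_empty.2 hS
        have hTne : T.Nonempty := by
          obtain ⟨a, ha⟩ := hSne
          have : v a ∈ T.val.map v := by rw [← h]; exact Multiset.mem_map_of_mem v ha
          obtain ⟨b, hb, -⟩ := Multiset.mem_map.1 this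
          exact ⟨b, hb⟩
        have hvb : v (bestGood v S) = v (bestGood v T) := by
          apply le_antisymm
          · have : v (bestGood v S) ∈ T.val.map v := by
              rw [← h]; exact Multiset.mem_map_of_mem v (best_mem v hSne)
            obtain ⟨a, ha, hva⟩ := Multiset.mem_map.1 this
            rw [← hva]; exact best_le v ha
          · have : v (bestGood v T) ∈ S.val.map v := by
              rw [h]; exact Multiset.mem_map_of_mem v (best_mem v hTne)
            obtain ⟨a, ha, hva⟩ := Multiset.mem_map.1 this
            rw [← hva]; exact best_le v ha
        rw [map_erase_val v (best_mem v hSne), map_erase_val v (best_mem v hTne),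
          hvb, h]

lemma tps_le_div [Nonempty α] (v : α → ℝ) (n : ℕ) (S : Finset α) (hn : 1 ≤ n) :
    TPS v n S ≤ (∑ x ∈ S, v x) / n := by
  match n with
  | 1 => simp [TPS]
  | n + 2 => exact min_le_left _ _

lemma sum_erase_le [Nonempty α] (v : α → ℝ) {S : Finset α} {x : α} (hx : x ∈ S) :
    ∑ y ∈ S.erase (bestGood v S), v y ≤ ∑ y ∈ S.erase x, v y := by
  have hb : bestGood v S ∈ S := best_mem v ⟨x, hx⟩
  rw [Finset.sum_erase_eq_sub hb, Finset.sum_erase_eq_sub hx]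
  have := best_le v hx
  linarith

lemma tps_step [Nonempty α] (v : α → ℝ) :
    ∀ n (S : Finset α) (x : α), x ∈ S → TPS v (n+2) S ≤ TPS v (n+1) (S.erase x) := by
  intro n
  induction n with
  | zero =>
    intro S x hx
    simp only [TPS]
    exact le_trans (min_le_right _ _) (sum_erase_le v hx)
  | succ n ihn =>
    intro S x hx
    by_cases hxb : x = bestGood v S
    · subst hxb
      exact min_le_right _ _
    · set b := bestGood v S with hbdef
      have hbS : b ∈ S := best_mem v ⟨x, hx⟩
      have hxe : x ∈ S.erase b := Finset.mem_erase.2 ⟨hxb, hx⟩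
      have hbe : b ∈ S.erase x := Finset.mem_erase.2 ⟨fun h => hxb h.symm, hbS⟩
      have h1 : TPS v (n+3) S ≤ TPS v (n+2) (S.erase b) := min_le_right _ _
      refine le_trans h1 ?_
      show TPS v (n+2) (S.erase b) ≤
        min ((∑ y ∈ S.erase x, v y) / ((n + 2 : ℕ) : ℝ))
          (TPS v (n+1) ((S.erase x).erase (bestGood v (S.erase x))))
      refine le_min ?_ ?_
      · refine le_trans (tps_le_div v (n+2) (S.erase b) (by omega)) ?_
        exact div_le_div_of_nonneg_right (sum_erase_le v hx) (by positivity)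
      · have h2 : TPS v (n+2) (S.erase b) ≤ TPS v (n+1) ((S.erase b).erase x) :=
          ihn (S.erase b) x hxe
        refine le_trans h2 (le_of_eq ?_)
        apply tps_congr
        set b' := bestGood v (S.erase x) with hb'def
        have hb' : b' ∈ S.erase x := best_mem v ⟨b, hbe⟩
        have hvb' : v b' = v b := by
          apply le_antisymm
          · exact best_le v (Finset.mem_of_mem_erase hb')
          · exact best_le v hbe
        rw [Finset.erase_right_comm]
        rw [map_erase_val v hbe, map_erase_val v hb', hvb']

lemma tps_chain [Nonempty α] (v : α → ℝ) (M : Finset α) (n : ℕ) :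
    ∀ S : Finset α, S ⊆ M → S.card + 1 ≤ n → TPS v n M ≤ TPS v (n - S.card) (M \ S) := by
  intro S
  induction S using Finset.induction_on with
  | empty => intro _ _; simp
  | @insert a S ha ih =>
    intro hsub hcard
    rw [Finset.card_insert_of_notMem ha] at hcard
    have h1 : TPS v n M ≤ TPS v (n - S.card) (M \ S) :=
      ih (fun x hx => hsub (Finset.mem_insert_of_mem hx)) (by omega)
    refine le_trans h1 ?_
    have haMS : a ∈ M \ S :=
      Finset.mem_sdiff.2 ⟨hsub (Finset.mem_insert_self a S), ha⟩
    have hrw : M \ insert a S = (M \ S).erase a := by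
      rw [Finset.sdiff_insert]
    obtain ⟨m, hm⟩ : ∃ m, n - S.card = m + 2 := ⟨n - S.card - 2, by omega⟩
    rw [hrw, Finset.card_insert_of_notMem ha, hm,
      show n - (S.card + 1) = m + 1 by omega]
    exact tps_step v m (M \ S) a haMS


/-- r-monotonicity of the TPS: removing any `r ≤ n` goods from `M` leaves value at
least `(n − r) · TPS_n(v, M)`. -/
theorem tps_r_monotone [Nonempty α] (v : α → ℝ) (M S : Finset α) (n r : ℕ)
    (hv : ∀ a, 0 ≤ v a) (hS : S ⊆ M) (hr : S.card = r) (hrn : r ≤ n) :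
    ((n - r : ℕ) : ℝ) * TPS v n M ≤ ∑ x ∈ M \ S, v x := by
  rcases eq_or_lt_of_le hrn with h | h
  · rw [← h]
    simp only [Nat.sub_self, Nat.cast_zero, zero_mul]
    exact Finset.sum_nonneg fun x _ => hv x
  · have h1 : TPS v n M ≤ TPS v (n - r) (M \ S) := by
      rw [← hr]; exact tps_chain v M n S hS (by omega)
    have h2 : TPS v (n - r) (M \ S) ≤ (∑ x ∈ M \ S, v x) / ((n - r : ℕ) : ℝ) :=
      tps_le_div v (n - r) (M \ S) (by omega)
    have hc : (0:ℝ) < ((n - r : ℕ) : ℝ) := by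
      have : 1 ≤ n - r := by omega
      exact_mod_cast Nat.lt_of_lt_of_le Nat.zero_lt_one this
    calc ((n - r : ℕ) : ℝ) * TPS v n M
        ≤ ((n - r : ℕ) : ℝ) * ((∑ x ∈ M \ S, v x) / ((n - r : ℕ) : ℝ)) := by
          exact mul_le_mul_of_nonneg_left (le_trans h1 h2) hc.le
      _ = ∑ x ∈ M \ S, v x := by rw [← mul_div_assoc, mul_div_cancel_left₀ _ hc.ne']
end

section
/- Fix an ordering π of n agents with strict preference orders over m ≥ 2n goods, and for each cyclic shift j ∈ [n] let Y^{(j)} be the set of n goods picked when the agents pick single goods in turn in the cyclically shifted order starting from position j. Then for every agent i and index j, |Y^{(j)} ∩ Y^{(i_{+1})}| ≥ position of i in the shifted ordering π^{(j)}, where i_{+1} is the shift index for which agent i picks last. Consequently the set Z = (Y^{(j)} ∪ Y^{(i_{+1})}) \ {good picked by i in shift j} has size at most 2n − rank − 1, where rank ≤ position of i in π^{(j)} is the rank (in i's preference order) of the good i picks in shift j. -/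
open Finset

variable {α : Type*} [DecidableEq α] [Nonempty α]

/-- The most preferred good of `R` according to the (rank) function `f`
(smaller rank means more preferred); arbitrary if `R` is empty. -/
noncomputable def fav (f : α → ℕ) (R : Finset α) : α :=
  if h : R.Nonempty then (R.exists_min_image f h).choose else Classical.arbitrary α

/-- The sequence of goods picked when the agents in the list pick in turn, each
taking her single most preferred remaining good. `pref a` is the rank function of
agent `a` (smaller is better). -/
noncomputable def pickSeq {ι : Type*} (pref : ι → α → ℕ) : List ι → Finset α → List α
  | [], _ => []
  | a :: rest, R =>
    if R.Nonempty then
      fav (pref a) R :: pickSeq pref rest (R.erase (fav (pref a) R))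
    else []

/-- The agents in the cyclic shift of the ordering `π` starting at position `s`:
the agent at position `s` first, then `s+1`, …, wrapping around cyclically.
(`π i` is the position of agent `i`; `π.symm p` is the agent at position `p`.) -/
def shiftOrder {n : ℕ} [NeZero n] (π : Equiv.Perm (Fin n)) (s : Fin n) : List (Fin n) :=
  List.ofFn fun t : Fin n => π.symm (s + t)

/-- The set of `n` goods picked in the cyclic shift starting at position `s`. -/
noncomputable def pickedSet {n : ℕ} [NeZero n] (pref : Fin n → α → ℕ)
    (π : Equiv.Perm (Fin n)) (M : Finset α) (s : Fin n) : Finset α :=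
  (pickSeq pref (shiftOrder π s) M).toFinset

set_option linter.unusedSectionVars false

section Aux
variable {ι : Type*} (pref : ι → α → ℕ)

lemma fav_mem (f : α → ℕ) {R : Finset α} (h : R.Nonempty) : fav f R ∈ R := by
  rw [fav, dif_pos h]
  exact (R.exists_min_image f h).choose_spec.1

lemma fav_min (f : α → ℕ) {R : Finset α} (h : R.Nonempty) {x : α} (hx : x ∈ R) :
    f (fav f R) ≤ f x := by
  rw [fav, dif_pos h]
  exact (R.exists_min_image f h).choose_spec.2 x hx

lemma fav_subset {f : α → ℕ} (hf : Function.Injective f) {R T : Finset α}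
    (hT : T ⊆ R) (hg : fav f R ∈ T) : fav f T = fav f R := by
  have hTne : T.Nonempty := ⟨_, hg⟩
  have hRne : R.Nonempty := hTne.mono hT
  exact hf (le_antisymm (fav_min f hTne hg) (fav_min f hRne (hT (fav_mem f hTne))))

variable {ι : Type*} (pref : ι → α → ℕ)

lemma pickSeq_subset : ∀ (L : List ι) (R : Finset α), ∀ x ∈ pickSeq pref L R, x ∈ R
  | [], R => by simp [pickSeq]
  | a :: L, R => by
    intro x hx
    rw [pickSeq] at hx
    split_ifs at hx with h
    · rw [List.mem_cons] at hx
      rcases hx with hx | hx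
      · exact hx ▸ fav_mem _ h
      · exact Finset.erase_subset _ _ (pickSeq_subset L _ x hx)
    · simp at hx

lemma pickSeq_length : ∀ (L : List ι) (R : Finset α), L.length ≤ R.card →
    (pickSeq pref L R).length = L.length
  | [], R => by simp [pickSeq]
  | a :: L, R => by
    intro h
    have hR : R.Nonempty := Finset.card_pos.mp (by simp at h; omega)
    rw [pickSeq, if_pos hR]
    simp only [List.length_cons, Nat.succ_inj]
    refine pickSeq_length L _ ?_
    rw [Finset.card_erase_of_mem (fav_mem _ hR)]
    simp at h; omega

lemma pickSeq_nodup : ∀ (L : List ι) (R : Finset α), (pickSeq pref L R).Nodup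
  | [], R => by simp [pickSeq]
  | a :: L, R => by
    rw [pickSeq]
    split_ifs with h
    · refine List.nodup_cons.mpr ⟨fun hmem => ?_, pickSeq_nodup L _⟩
      have := pickSeq_subset pref L _ _ hmem
      simp at this
    · simp

lemma pickSeq_prefix_subset : ∀ (A B : List ι) (R : Finset α),
    (pickSeq pref A R).toFinset ⊆ (pickSeq pref (A ++ B) R).toFinset
  | [], B, R => by simp [pickSeq]
  | a :: A, B, R => by
    rw [List.cons_append, pickSeq, pickSeq]
    split_ifs with h
    · simp only [List.toFinset_cons]
      exact Finset.insert_subset_insert _ (pickSeq_prefix_subset A B _)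
    · simp

variable (hinj : ∀ i, Function.Injective (pref i))

lemma pickSeq_erase (hinj : ∀ i, Function.Injective (pref i)) :
    ∀ (S : List ι) (R : Finset α) (x : α), x ∈ R → S.length < R.card →
    (pickSeq pref S R).toFinset ⊆ insert x (pickSeq pref S (R.erase x)).toFinset
  | [], R, x => by simp [pickSeq]
  | a :: S, R, x => by
    intro hx hlen
    have hR : R.Nonempty := ⟨x, hx⟩
    have hRx : (R.erase x).Nonempty := by
      rw [← Finset.card_pos, Finset.card_erase_of_mem hx]
      simp at hlen; omega
    set g := fav (pref a) R with hg
    rw [pickSeq, if_pos hR, pickSeq, if_pos hRx]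
    by_cases hgx : g = x
    · -- g = x : fav of R is x
      set g' := fav (pref a) (R.erase x) with hg'
      have hsub : (pickSeq pref S (R.erase x)).toFinset ⊆
          insert g' (pickSeq pref S ((R.erase x).erase g')).toFinset :=
        pickSeq_erase hinj S (R.erase x) g' (fav_mem _ hRx) (by
          rw [Finset.card_erase_of_mem hx] at *
          simp at hlen ⊢; omega)
      rw [show fav (pref a) R = x from hgx]
      simp only [List.toFinset_cons]
      intro y hy
      simp only [Finset.mem_insert] at hy ⊢
      rcases hy with hy | hy
      · exact Or.inl hy
      · exact Or.inr (Finset.mem_insert.mp (hsub hy))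
    · -- g ≠ x : fav of R.erase x is also g
      have hgmem : g ∈ R.erase x := Finset.mem_erase.mpr ⟨hgx, fav_mem _ hR⟩
      have : fav (pref a) (R.erase x) = g :=
        fav_subset (hinj a) (Finset.erase_subset _ _) hgmem
      rw [this]
      have hcomm : (R.erase x).erase g = (R.erase g).erase x := Finset.erase_right_comm
      rw [hcomm]
      have hsub : (pickSeq pref S (R.erase g)).toFinset ⊆
          insert x (pickSeq pref S ((R.erase g).erase x)).toFinset :=
        pickSeq_erase hinj S (R.erase g) x
          (Finset.mem_erase.mpr ⟨fun h => hgx h.symm, hx⟩)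
          (by rw [Finset.card_erase_of_mem (fav_mem _ hR)]; simp at hlen; omega)
      simp only [List.toFinset_cons]
      intro y hy
      simp only [Finset.mem_insert] at hy ⊢
      rcases hy with hy | hy
      · exact Or.inr (Or.inl hy)
      · rcases Finset.mem_insert.mp (hsub hy) with h1 | h1
        · exact Or.inl h1
        · exact Or.inr (Or.inr h1)

lemma pickSeq_cons_superset (hinj : ∀ i, Function.Injective (pref i))
    (a : ι) (S : List ι) (R : Finset α) (h : S.length < R.card) :
    (pickSeq pref S R).toFinset ⊆ (pickSeq pref (a :: S) R).toFinset := by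
  have hR : R.Nonempty := Finset.card_pos.mp (by omega)
  rw [pickSeq, if_pos hR]
  simp only [List.toFinset_cons]
  exact pickSeq_erase pref hinj S R _ (fav_mem _ hR) h

lemma pickSeq_append_superset (hinj : ∀ i, Function.Injective (pref i)) :
    ∀ (T S : List ι) (R : Finset α), (T ++ S).length ≤ R.card →
    (pickSeq pref S R).toFinset ⊆ (pickSeq pref (T ++ S) R).toFinset
  | [], S, R => by simp
  | a :: T, S, R => by
    intro h
    simp only [List.length_append, List.length_cons] at h
    refine (pickSeq_append_superset hinj T S R (by simp; omega)).trans ?_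
    rw [List.cons_append]
    exact pickSeq_cons_superset pref hinj a (T ++ S) R (by simp; omega)

lemma pickSeq_rank (hinj : ∀ i, Function.Injective (pref i)) :
    ∀ (L : List ι) (R : Finset α) (t : ℕ) (ht : t < L.length),
    L.length ≤ R.card → ∀ d x, x ∈ R →
    pref (L.get ⟨t, ht⟩) x ≤ pref (L.get ⟨t, ht⟩) ((pickSeq pref L R).getD t d) →
    x ∈ (pickSeq pref L R).take (t + 1)
  | [], R, t, ht => by simp at ht
  | a :: L, R, t, ht => by
    intro hcard d x hx hle
    have hR : R.Nonempty := ⟨x, hx⟩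
    rw [pickSeq, if_pos hR] at hle ⊢
    match t with
    | 0 =>
      simp only [List.getD_cons_zero, List.get] at hle
      have : x = fav (pref a) R := hinj a (le_antisymm hle (fav_min _ hR hx))
      simp [this]
    | t + 1 =>
      rw [List.take_succ_cons, List.mem_cons]
      by_cases hxf : x = fav (pref a) R
      · exact Or.inl hxf
      · refine Or.inr (pickSeq_rank hinj L (R.erase (fav (pref a) R)) t
          (by simpa using ht) ?_ d x (Finset.mem_erase.mpr ⟨hxf, hx⟩) ?_)
        · rw [Finset.card_erase_of_mem (fav_mem _ hR)]
          simp at hcard; omega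
        · simpa using hle

lemma shiftOrder_length {n : ℕ} [NeZero n] (π : Equiv.Perm (Fin n)) (s : Fin n) :
    (shiftOrder π s).length = n := by simp [shiftOrder]

lemma shiftOrder_getElem {n : ℕ} [NeZero n] (π : Equiv.Perm (Fin n)) (s : Fin n)
    (k : ℕ) (hk : k < (shiftOrder π s).length) :
    (shiftOrder π s)[k] = π.symm (s + ⟨k, by simpa [shiftOrder_length] using hk⟩) := by
  simp [shiftOrder]

lemma shiftOrder_rotate {n : ℕ} [NeZero n] (π : Equiv.Perm (Fin n)) (s c : Fin n) :
    shiftOrder π (s + c) = (shiftOrder π s).rotate c.val := by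
  apply List.ext_getElem
  · simp [shiftOrder_length]
  · intro k h1 h2
    have hk : k < n := by simpa [shiftOrder_length] using h1
    rw [List.getElem_rotate, shiftOrder_getElem, shiftOrder_getElem]
    congr 1
    rw [add_assoc]
    congr 1
    rw [add_comm]
    apply Fin.ext
    simp [Fin.add_def, shiftOrder_length]

end Aux

/-- Intersection bound for cyclic shifts of a picking order: for every agent `i` and
shift `j`, with `i₊₁ = π i + 1` the shift in which `i` picks last,
`|Y⁽ʲ⁾ ∩ Y⁽ⁱ⁺¹⁾|` is at least the (1-indexed) position of `i` in shift `j`; moreover,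
with `g` the good picked by `i` in shift `j` and `rank` its rank in `i`'s preference
(so `rank ≤` position of `i`), the zeroed set `(Y⁽ʲ⁾ ∪ Y⁽ⁱ⁺¹⁾) \ {g}` has size at most
`2n − rank − 1`. -/
theorem union_picking_size {n : ℕ} [NeZero n] (pref : Fin n → α → ℕ)
    (π : Equiv.Perm (Fin n)) (M : Finset α) (hM : 2 * n ≤ M.card)
    (hinj : ∀ i, Function.Injective (pref i)) (i j : Fin n) :
    ((π i - j : Fin n) : ℕ) + 1 ≤
        ((pickedSet pref π M j) ∩ (pickedSet pref π M (π i + 1))).card ∧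
    ((M.filter fun x => pref i x ≤
        pref i ((pickSeq pref (shiftOrder π j) M).getD ((π i - j : Fin n) : ℕ)
          (Classical.arbitrary α))).card ≤ ((π i - j : Fin n) : ℕ) + 1) ∧
    (((pickedSet pref π M j) ∪ (pickedSet pref π M (π i + 1))).erase
        ((pickSeq pref (shiftOrder π j) M).getD ((π i - j : Fin n) : ℕ)
          (Classical.arbitrary α))).card ≤
      2 * n - (M.filter fun x => pref i x ≤
        pref i ((pickSeq pref (shiftOrder π j) M).getD ((π i - j : Fin n) : ℕ)
          (Classical.arbitrary α))).card - 1 := by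
  have hn : 0 < n := Nat.pos_of_ne_zero (NeZero.ne n)
  set t := ((π i - j : Fin n) : ℕ) with htdef
  have ht : t < n := (π i - j).isLt
  have hnM : n ≤ M.card := by omega
  set L := shiftOrder π j with hLdef
  have hL : L.length = n := shiftOrder_length π j
  have hlenpick : (pickSeq pref L M).length = n := by
    rw [pickSeq_length pref L M (by omega), hL]
  set d := (Classical.arbitrary α) with hddef
  set g := (pickSeq pref L M).getD t d with hgdef
  have hgget : g = (pickSeq pref L M)[t]'(by omega) := by
    rw [hgdef, List.getD_eq_getElem]
  have hgmemL : g ∈ pickSeq pref L M := by rw [hgget]; exact List.getElem_mem _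
  have hgM : g ∈ M := pickSeq_subset pref L M g hgmemL
  have hgYj : g ∈ pickedSet pref π M j := by
    rw [pickedSet]; exact List.mem_toFinset.mpr hgmemL
  set S := L.take (t+1) with hSdef
  set T := L.drop (t+1) with hTdef
  have hST : S ++ T = L := List.take_append_drop _ _
  have hSlen : S.length = t + 1 := by rw [hSdef, List.length_take, hL]; omega
  have hTSlen : (T ++ S).length = n := by
    rw [List.length_append, hSlen, hTdef, List.length_drop, hL]; omega
  -- shift (π i + 1) is the rotation of shift j by t+1
  have hshift : shiftOrder π (π i + 1) = T ++ S := by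
    have h1 : π i + 1 = j + (π i - j + 1) := by abel
    rw [h1, shiftOrder_rotate]
    have hcval : ((π i - j + 1 : Fin n) : ℕ) = (t + 1) % n := by
      conv_rhs => rw [Nat.add_mod, Nat.mod_eq_of_lt ht]
      rw [Fin.val_add, Fin.val_one']
    rw [hcval, ← hLdef, show (t + 1) % n = (t + 1) % L.length by rw [hL],
      List.rotate_mod, List.rotate_eq_drop_append_take (by omega)]
  have hAsub : (pickSeq pref S M).toFinset ⊆ pickedSet pref π M j := by
    rw [pickedSet, ← hLdef, ← hST]
    exact pickSeq_prefix_subset pref S T M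
  have hBsub : (pickSeq pref S M).toFinset ⊆ pickedSet pref π M (π i + 1) := by
    rw [pickedSet, hshift]
    exact pickSeq_append_superset pref hinj T S M (by omega)
  have hScard : (pickSeq pref S M).toFinset.card = t + 1 := by
    rw [List.toFinset_card_of_nodup (pickSeq_nodup pref S M),
      pickSeq_length pref S M (by omega), hSlen]
  have hinter : t + 1 ≤ ((pickedSet pref π M j) ∩ (pickedSet pref π M (π i + 1))).card := by
    rw [← hScard]
    exact Finset.card_le_card (Finset.subset_inter hAsub hBsub)
  -- the agent at position t in shift j is i
  have htL : t < L.length := by omega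
  have hagent : L.get ⟨t, htL⟩ = i := by
    show (shiftOrder π j)[t]'(by rw [shiftOrder_length]; omega) = i
    rw [shiftOrder_getElem]
    have key : ∀ (h : t < n), π.symm (j + ⟨t, h⟩) = i := by
      intro h
      have h3 : (⟨t, h⟩ : Fin n) = π i - j := Fin.ext rfl
      have h4 : j + (π i - j) = π i := by abel
      rw [h3, h4]
      simp
    exact key _
  -- rank bound
  have hfilter : (M.filter fun x => pref i x ≤ pref i g) ⊆
      ((pickSeq pref L M).take (t + 1)).toFinset := by
    intro x hx
    rw [Finset.mem_filter] at hx
    rw [List.mem_toFinset]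
    refine pickSeq_rank pref hinj L M t htL (by omega) d x hx.1 ?_
    rw [hagent]
    exact hx.2
  have hrank : (M.filter fun x => pref i x ≤ pref i g).card ≤ t + 1 := by
    refine (Finset.card_le_card hfilter).trans ?_
    refine (List.toFinset_card_le _).trans ?_
    rw [List.length_take]; omega
  refine ⟨hinter, hrank, ?_⟩
  -- final counting
  have hr1 : 1 ≤ (M.filter fun x => pref i x ≤ pref i g).card :=
    Finset.card_pos.mpr ⟨g, Finset.mem_filter.mpr ⟨hgM, le_refl _⟩⟩
  have hYj : (pickedSet pref π M j).card = n := by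
    rw [pickedSet, ← hLdef, List.toFinset_card_of_nodup (pickSeq_nodup pref L M), hlenpick]
  have hYi : (pickedSet pref π M (π i + 1)).card = n := by
    rw [pickedSet, List.toFinset_card_of_nodup (pickSeq_nodup pref _ M),
      pickSeq_length pref _ M (by rw [shiftOrder_length]; omega), shiftOrder_length]
  have huni := Finset.card_union_add_card_inter (pickedSet pref π M j)
    (pickedSet pref π M (π i + 1))
  have hgU : g ∈ (pickedSet pref π M j) ∪ (pickedSet pref π M (π i + 1)) :=
    Finset.mem_union_left _ hgYj
  have herase := Finset.card_erase_of_mem hgU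
  omega
end

section
/- Two-agent easy case (all items small): let v_1, v_2 be additive valuations over M with a common favorite good y, and suppose v_i(x) ≤ (2/3)·TPS_2(v_i, M) for every good x and both i. Then there exists a partition of M into S and T such that v_i(S) ≥ (2/3)·TPS_2(v_i, M) and v_i(T) ≥ (2/3)·TPS_2(v_i, M) for both i ∈ {1,2}, where moreover for each agent the values of S and T differ by at most the value of a single good. -/
set_option maxHeartbeats 1000000


open Finset

variable {α : Type*} [DecidableEq α]

/-- helper: both fractions at most 1/2 -/
lemma round_half_low (fa fb a1 b1 a2 b2 : ℝ)
    (hfa0 : 0 ≤ fa) (hfa : fa ≤ 1/2) (hfb0 : 0 ≤ fb) (hfb : fb ≤ 1/2)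
    (ha1 : 0 ≤ a1) (hb1 : 0 ≤ b1) (ha2 : 0 ≤ a2) (hb2 : 0 ≤ b2) :
    ∃ ea eb : ℝ, (ea = 1 - fa ∨ ea = -fa) ∧ (eb = 1 - fb ∨ eb = -fb) ∧
      |ea * a1 + eb * b1| ≤ max a1 b1 / 2 ∧ |ea * a2 + eb * b2| ≤ max a2 b2 / 2 := by
  set B1 := max a1 b1 with hB1
  set B2 := max a2 b2 with hB2
  have ha1B : a1 ≤ B1 := le_max_left _ _
  have hb1B : b1 ≤ B1 := le_max_right _ _
  have ha2B : a2 ≤ B2 := le_max_left _ _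
  have hb2B : b2 ≤ B2 := le_max_right _ _
  have hB1n : 0 ≤ B1 := le_trans ha1 ha1B
  have hB2n : 0 ≤ B2 := le_trans ha2 ha2B
  have q1 : 0 ≤ fa * a1 := mul_nonneg hfa0 ha1
  have q2 : 0 ≤ fb * b1 := mul_nonneg hfb0 hb1
  have q3 : 0 ≤ fa * a2 := mul_nonneg hfa0 ha2
  have q4 : 0 ≤ fb * b2 := mul_nonneg hfb0 hb2
  have r1 : fa * a1 ≤ a1 / 2 := by nlinarith
  have r2 : fb * b1 ≤ b1 / 2 := by nlinarith
  have r3 : fa * a2 ≤ a2 / 2 := by nlinarith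
  have r4 : fb * b2 ≤ b2 / 2 := by nlinarith
  by_cases h31 : fa * a1 + fb * b1 ≤ B1 / 2
  · by_cases h32 : fa * a2 + fb * b2 ≤ B2 / 2
    · -- round both down
      refine ⟨-fa, -fb, Or.inr rfl, Or.inr rfl, ?_, ?_⟩
      · rw [abs_le]; constructor <;> nlinarith
      · rw [abs_le]; constructor <;> nlinarith
    · -- agent 2 fails e3 hence accepts both mixed roundings
      push_neg at h32
      have hs : 1/2 < fa + fb := by
        by_contra h
        push_neg at h
        nlinarith [mul_le_mul_of_nonneg_left ha2B hfa0, mul_le_mul_of_nonneg_left hb2B hfb0,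
          mul_nonneg (by linarith : (0:ℝ) ≤ 1/2 - fa - fb) hB2n]
      rcases le_total b1 a1 with hab | hab
      · -- agent 1 accepts e2 = (-fa, 1-fb)
        refine ⟨-fa, 1 - fb, Or.inr rfl, Or.inl rfl, ?_, ?_⟩
        · rw [abs_le]
          constructor
          · nlinarith [mul_nonneg (by linarith : (0:ℝ) ≤ 1 - fb) hb1]
          · nlinarith [mul_le_mul_of_nonneg_left hab hfa0,
              mul_nonneg (by linarith : (0:ℝ) ≤ fa + fb - 1/2) hb1]
        · rw [abs_le]
          constructor
          · nlinarith [mul_nonneg (by linarith : (0:ℝ) ≤ 1 - fb) hb2]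
          · nlinarith
      · -- agent 1 accepts e1 = (1-fa, -fb)
        refine ⟨1 - fa, -fb, Or.inl rfl, Or.inr rfl, ?_, ?_⟩
        · rw [abs_le]
          constructor
          · nlinarith [mul_nonneg (by linarith : (0:ℝ) ≤ 1 - fa) ha1]
          · nlinarith [mul_le_mul_of_nonneg_left hab hfb0,
              mul_nonneg (by linarith : (0:ℝ) ≤ fa + fb - 1/2) ha1]
        · rw [abs_le]
          constructor
          · nlinarith [mul_nonneg (by linarith : (0:ℝ) ≤ 1 - fa) ha2]
          · nlinarith
  · by_cases h32 : fa * a2 + fb * b2 ≤ B2 / 2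
    · push_neg at h31
      have hs : 1/2 < fa + fb := by
        by_contra h
        push_neg at h
        nlinarith [mul_le_mul_of_nonneg_left ha1B hfa0, mul_le_mul_of_nonneg_left hb1B hfb0,
          mul_nonneg (by linarith : (0:ℝ) ≤ 1/2 - fa - fb) hB1n]
      rcases le_total b2 a2 with hab | hab
      · refine ⟨-fa, 1 - fb, Or.inr rfl, Or.inl rfl, ?_, ?_⟩
        · rw [abs_le]
          constructor
          · nlinarith [mul_nonneg (by linarith : (0:ℝ) ≤ 1 - fb) hb1]
          · nlinarith
        · rw [abs_le]
          constructor
          · nlinarith [mul_nonneg (by linarith : (0:ℝ) ≤ 1 - fb) hb2]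
          · nlinarith [mul_le_mul_of_nonneg_left hab hfa0,
              mul_nonneg (by linarith : (0:ℝ) ≤ fa + fb - 1/2) hb2]
      · refine ⟨1 - fa, -fb, Or.inl rfl, Or.inr rfl, ?_, ?_⟩
        · rw [abs_le]
          constructor
          · nlinarith [mul_nonneg (by linarith : (0:ℝ) ≤ 1 - fa) ha1]
          · nlinarith
        · rw [abs_le]
          constructor
          · nlinarith [mul_nonneg (by linarith : (0:ℝ) ≤ 1 - fa) ha2]
          · nlinarith [mul_le_mul_of_nonneg_left hab hfb0,
              mul_nonneg (by linarith : (0:ℝ) ≤ fa + fb - 1/2) ha2]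
    · -- both fail e3: both accept e1
      push_neg at h31; push_neg at h32
      refine ⟨1 - fa, -fb, Or.inl rfl, Or.inr rfl, ?_, ?_⟩
      · rw [abs_le]
        constructor
        · nlinarith [mul_nonneg (by linarith : (0:ℝ) ≤ 1 - fa) ha1]
        · nlinarith
      · rw [abs_le]
        constructor
        · nlinarith [mul_nonneg (by linarith : (0:ℝ) ≤ 1 - fa) ha2]
        · nlinarith

lemma round_two (fa fb a1 b1 a2 b2 : ℝ)
    (hfa0 : 0 ≤ fa) (hfa1 : fa ≤ 1) (hfb0 : 0 ≤ fb) (hfb1 : fb ≤ 1)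
    (ha1 : 0 ≤ a1) (hb1 : 0 ≤ b1) (ha2 : 0 ≤ a2) (hb2 : 0 ≤ b2) :
    ∃ ea eb : ℝ, (ea = 1 - fa ∨ ea = -fa) ∧ (eb = 1 - fb ∨ eb = -fb) ∧
      |ea * a1 + eb * b1| ≤ max a1 b1 / 2 ∧ |ea * a2 + eb * b2| ≤ max a2 b2 / 2 := by
  have ha1B : a1 ≤ max a1 b1 := le_max_left _ _
  have hb1B : b1 ≤ max a1 b1 := le_max_right _ _
  have ha2B : a2 ≤ max a2 b2 := le_max_left _ _
  have hb2B : b2 ≤ max a2 b2 := le_max_right _ _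
  rcases le_total fa (1/2) with hfa | hfa <;> rcases le_total fb (1/2) with hfb | hfb
  · exact round_half_low fa fb a1 b1 a2 b2 hfa0 hfa hfb0 hfb ha1 hb1 ha2 hb2
  · -- fa ≤ 1/2 ≤ fb : (-fa, 1-fb)
    refine ⟨-fa, 1 - fb, Or.inr rfl, Or.inl rfl, ?_, ?_⟩
    · rw [abs_le]
      constructor
      · nlinarith [mul_nonneg (by linarith : (0:ℝ) ≤ 1 - fb) hb1, mul_le_mul_of_nonneg_right hfa ha1]
      · nlinarith [mul_nonneg hfa0 ha1, mul_le_mul_of_nonneg_right (by linarith : 1 - fb ≤ 1/2) hb1]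
    · rw [abs_le]
      constructor
      · nlinarith [mul_nonneg (by linarith : (0:ℝ) ≤ 1 - fb) hb2, mul_le_mul_of_nonneg_right hfa ha2]
      · nlinarith [mul_nonneg hfa0 ha2, mul_le_mul_of_nonneg_right (by linarith : 1 - fb ≤ 1/2) hb2]
  · -- fb ≤ 1/2 ≤ fa : (1-fa, -fb)
    refine ⟨1 - fa, -fb, Or.inl rfl, Or.inr rfl, ?_, ?_⟩
    · rw [abs_le]
      constructor
      · nlinarith [mul_nonneg (by linarith : (0:ℝ) ≤ 1 - fa) ha1, mul_le_mul_of_nonneg_right hfb hb1]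
      · nlinarith [mul_nonneg hfb0 hb1, mul_le_mul_of_nonneg_right (by linarith : 1 - fa ≤ 1/2) ha1]
    · rw [abs_le]
      constructor
      · nlinarith [mul_nonneg (by linarith : (0:ℝ) ≤ 1 - fa) ha2, mul_le_mul_of_nonneg_right hfb hb2]
      · nlinarith [mul_nonneg hfb0 hb2, mul_le_mul_of_nonneg_right (by linarith : 1 - fa ≤ 1/2) ha2]
  · -- both ≥ 1/2 : mirror
    obtain ⟨ea, eb, hea, heb, h1, h2⟩ :=
      round_half_low (1 - fa) (1 - fb) a1 b1 a2 b2 (by linarith) (by linarith)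
        (by linarith) (by linarith) ha1 hb1 ha2 hb2
    refine ⟨-ea, -eb, ?_, ?_, ?_, ?_⟩
    · rcases hea with h | h
      · right; rw [h]; ring
      · left; rw [h]; ring
    · rcases heb with h | h
      · right; rw [h]; ring
      · left; rw [h]; ring
    · have e : (-ea) * a1 + (-eb) * b1 = -(ea * a1 + eb * b1) := by ring
      rw [e, abs_neg]; exact h1
    · have e : (-ea) * a2 + (-eb) * b2 = -(ea * a2 + eb * b2) := by ring
      rw [e, abs_neg]; exact h2

lemma kernel3 (u1 u2 u3 w1 w2 w3 : ℝ) :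
    ∃ d1 d2 d3 : ℝ, (d1 ≠ 0 ∨ d2 ≠ 0 ∨ d3 ≠ 0) ∧
      u1 * d1 + u2 * d2 + u3 * d3 = 0 ∧ w1 * d1 + w2 * d2 + w3 * d3 = 0 := by
  by_cases hc1 : u2 * w3 - u3 * w2 ≠ 0
  · exact ⟨u2 * w3 - u3 * w2, u3 * w1 - u1 * w3, u1 * w2 - u2 * w1,
      Or.inl hc1, by ring, by ring⟩
  by_cases hc2 : u3 * w1 - u1 * w3 ≠ 0
  · exact ⟨u2 * w3 - u3 * w2, u3 * w1 - u1 * w3, u1 * w2 - u2 * w1,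
      Or.inr (Or.inl hc2), by ring, by ring⟩
  by_cases hc3 : u1 * w2 - u2 * w1 ≠ 0
  · exact ⟨u2 * w3 - u3 * w2, u3 * w1 - u1 * w3, u1 * w2 - u2 * w1,
      Or.inr (Or.inr hc3), by ring, by ring⟩
  push_neg at hc1 hc2 hc3
  by_cases h1 : u1 ≠ 0
  · refine ⟨u2, -u1, 0, Or.inr (Or.inl (neg_ne_zero.mpr h1)), by ring, by linarith [hc3]⟩
  push_neg at h1
  by_cases h2 : u2 ≠ 0
  · refine ⟨0, u3, -u2, Or.inr (Or.inr (neg_ne_zero.mpr h2)), by ring, by linarith [hc1]⟩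
  push_neg at h2
  by_cases h3 : u3 ≠ 0
  · -- u1 = u2 = 0, u3 ≠ 0: from hc2, u3*w1 = 0 so w1 = 0
    have hw1 : w1 = 0 := by
      have : u3 * w1 = 0 := by rw [h1] at hc2; linarith [hc2]
      rcases mul_eq_zero.mp this with h | h
      · exact absurd h h3
      · exact h
    exact ⟨1, 0, 0, Or.inl one_ne_zero, by simp [h1], by simp [hw1]⟩
  push_neg at h3
  -- u = 0
  by_cases hw1 : w1 ≠ 0
  · exact ⟨w2, -w1, 0, Or.inr (Or.inl (neg_ne_zero.mpr hw1)), by simp [h1, h2], by ring⟩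
  · push_neg at hw1
    exact ⟨1, 0, 0, Or.inl one_ne_zero, by simp [h1], by simp [hw1]⟩

lemma descent (v₁ v₂ : α → ℝ) (M : Finset α) (x : α → ℝ)
    (hx : ∀ j, 0 ≤ x j ∧ x j ≤ 1)
    (hF : (M.filter (fun j => x j ≠ 0 ∧ x j ≠ 1)).card = 3) :
    ∃ x' : α → ℝ, (∀ j, 0 ≤ x' j ∧ x' j ≤ 1) ∧
      (M.filter (fun j => x' j ≠ 0 ∧ x' j ≠ 1)).card ≤ 2 ∧
      (∑ j ∈ M, v₁ j * x' j) = (∑ j ∈ M, v₁ j * x j) ∧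
      (∑ j ∈ M, v₂ j * x' j) = (∑ j ∈ M, v₂ j * x j) := by
  classical
  set F := M.filter (fun j => x j ≠ 0 ∧ x j ≠ 1) with hFdef
  obtain ⟨a, b, c, hab, hac, hbc, hFeq⟩ := Finset.card_eq_three.mp hF
  have hFM : F ⊆ M := Finset.filter_subset _ _
  have haF : a ∈ F := by rw [hFeq]; simp
  have hbF : b ∈ F := by rw [hFeq]; simp
  have hcF : c ∈ F := by rw [hFeq]; simp
  have hfrac : ∀ j ∈ F, 0 < x j ∧ x j < 1 := by
    intro j hj
    rw [hFdef, Finset.mem_filter] at hj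
    exact ⟨lt_of_le_of_ne (hx j).1 (Ne.symm hj.2.1), lt_of_le_of_ne (hx j).2 hj.2.2⟩
  obtain ⟨da, db, dc, hdne, hk1, hk2⟩ :=
    kernel3 (v₁ a) (v₁ b) (v₁ c) (v₂ a) (v₂ b) (v₂ c)
  set δ : α → ℝ := fun j => if j = a then da else if j = b then db else if j = c then dc else 0
    with hδdef
  have hδa : δ a = da := by simp [hδdef]
  have hδb : δ b = db := by simp [hδdef, hab.symm]
  have hδc : δ c = dc := by simp [hδdef, hac.symm, hbc.symm]
  have hδsupp : ∀ j, δ j ≠ 0 → j ∈ F := by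
    intro j hj
    rw [hδdef] at hj
    simp only at hj
    rw [hFeq]
    by_cases h1 : j = a
    · simp [h1]
    by_cases h2 : j = b
    · simp [h2]
    by_cases h3 : j = c
    · simp [h3]
    · exfalso; apply hj; simp [h1, h2, h3]
  set C := F.filter (fun j => δ j ≠ 0) with hCdef
  have hCne : C.Nonempty := by
    rcases hdne with h | h | h
    · exact ⟨a, by rw [hCdef, Finset.mem_filter]; exact ⟨haF, by rw [hδa]; exact h⟩⟩
    · exact ⟨b, by rw [hCdef, Finset.mem_filter]; exact ⟨hbF, by rw [hδb]; exact h⟩⟩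
    · exact ⟨c, by rw [hCdef, Finset.mem_filter]; exact ⟨hcF, by rw [hδc]; exact h⟩⟩
  set tc : α → ℝ := fun j => if 0 < δ j then (1 - x j) / δ j else x j / (-δ j) with htcdef
  obtain ⟨j₀, hj₀C, hmin⟩ := C.exists_min_image tc hCne
  have hj₀F : j₀ ∈ F := (Finset.mem_filter.mp hj₀C).1
  have hδj₀ : δ j₀ ≠ 0 := (Finset.mem_filter.mp hj₀C).2
  have htcpos : ∀ j ∈ C, 0 < tc j := by
    intro j hj
    obtain ⟨hjF, hjδ⟩ := Finset.mem_filter.mp hj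
    obtain ⟨hx0, hx1⟩ := hfrac j hjF
    rw [htcdef]
    by_cases hpos : 0 < δ j
    · simp only [if_pos hpos]
      exact div_pos (by linarith) hpos
    · simp only [if_neg hpos]
      have : δ j < 0 := lt_of_le_of_ne (not_lt.mp hpos) hjδ
      exact div_pos hx0 (by linarith)
  have htpos : 0 < tc j₀ := htcpos j₀ hj₀C
  set t := tc j₀ with htdef
  set x' : α → ℝ := fun j => x j + t * δ j with hx'def
  -- coordinate bounds
  have hbound : ∀ j, 0 ≤ x' j ∧ x' j ≤ 1 := by
    intro j
    rw [hx'def]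
    simp only
    by_cases hδj : δ j = 0
    · rw [hδj]; simpa using hx j
    · have hjF : j ∈ F := hδsupp j hδj
      have hjC : j ∈ C := by rw [hCdef, Finset.mem_filter]; exact ⟨hjF, hδj⟩
      obtain ⟨hx0, hx1⟩ := hfrac j hjF
      have hle := hmin j hjC
      by_cases hpos : 0 < δ j
      · have htc : tc j * δ j = 1 - x j := by
          rw [htcdef]; simp only [if_pos hpos]; field_simp
        have h2 : t * δ j ≤ tc j * δ j := mul_le_mul_of_nonneg_right hle hpos.le
        constructor
        · nlinarith
        · rw [htc] at h2; linarith
      · have hneg : δ j < 0 := lt_of_le_of_ne (not_lt.mp hpos) hδj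
        have htc : tc j * δ j = -(x j) := by
          rw [htcdef]; simp only [if_neg hpos]
          rw [div_mul_eq_mul_div, div_neg, mul_div_cancel_right₀ _ hδj]
        have h2 : tc j * δ j ≤ t * δ j := mul_le_mul_of_nonpos_right hle hneg.le
        constructor
        · rw [htc] at h2; linarith
        · nlinarith
  -- j₀ becomes integral
  have hj₀int : x' j₀ = 0 ∨ x' j₀ = 1 := by
    rw [hx'def]
    simp only
    by_cases hpos : 0 < δ j₀
    · right
      rw [htdef, htcdef]
      simp only [if_pos hpos]
      field_simp
      ring
    · left
      have hneg : δ j₀ < 0 := lt_of_le_of_ne (not_lt.mp hpos) hδj₀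
      rw [htdef, htcdef]
      simp only [if_neg hpos]
      rw [div_mul_eq_mul_div, div_neg, mul_div_cancel_right₀ _ hδj₀]
      ring
  -- new fractional set is contained in F.erase j₀
  have hF'sub : M.filter (fun j => x' j ≠ 0 ∧ x' j ≠ 1) ⊆ F.erase j₀ := by
    intro j hj
    rw [Finset.mem_filter] at hj
    have hjM := hj.1
    have hj1 := hj.2.1
    have hj2 := hj.2.2
    have hjj₀ : j ≠ j₀ := by
      intro h
      rw [h] at hj1 hj2
      rcases hj₀int with h' | h'
      · exact hj1 h'
      · exact hj2 h'
    rw [Finset.mem_erase]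
    refine ⟨hjj₀, ?_⟩
    by_cases hδj : δ j = 0
    · have : x' j = x j := by rw [hx'def]; simp [hδj]
      rw [hFdef, Finset.mem_filter]
      rw [this] at hj1 hj2
      exact ⟨hjM, hj1, hj2⟩
    · exact hδsupp j hδj
  have hcard : (M.filter (fun j => x' j ≠ 0 ∧ x' j ≠ 1)).card ≤ 2 := by
    calc (M.filter (fun j => x' j ≠ 0 ∧ x' j ≠ 1)).card ≤ (F.erase j₀).card :=
        Finset.card_le_card hF'sub
      _ = 2 := by rw [Finset.card_erase_of_mem hj₀F, hF]
  -- sums preserved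
  have habc : ({a, b, c} : Finset α) ⊆ M := by rw [← hFeq]; exact hFM
  have key : ∀ v : α → ℝ, v a * da + v b * db + v c * dc = 0 →
      (∑ j ∈ M, v j * x' j) = ∑ j ∈ M, v j * x j := by
    intro v hk
    have hsplit : ∀ j, v j * x' j = v j * x j + t * (v j * δ j) := by
      intro j; rw [hx'def]; ring
    calc (∑ j ∈ M, v j * x' j) = ∑ j ∈ M, (v j * x j + t * (v j * δ j)) := by
          exact Finset.sum_congr rfl fun j _ => hsplit j
      _ = (∑ j ∈ M, v j * x j) + t * ∑ j ∈ M, v j * δ j := by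
          rw [Finset.sum_add_distrib, Finset.mul_sum]
      _ = ∑ j ∈ M, v j * x j := by
          have hz : ∑ j ∈ M, v j * δ j = ∑ j ∈ ({a, b, c} : Finset α), v j * δ j := by
            refine (Finset.sum_subset habc ?_).symm
            intro j hjM hjn
            have : δ j = 0 := by
              by_contra h
              have := hδsupp j h
              rw [hFeq] at this
              exact hjn this
            rw [this, mul_zero]
          have hsum3 : ∑ j ∈ ({a, b, c} : Finset α), v j * δ j = 0 := by
            rw [Finset.sum_insert (by simp [hab, hac]), Finset.sum_insert (by simp [hbc]),
              Finset.sum_singleton, hδa, hδb, hδc]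
            linarith [hk]
          rw [hz, hsum3, mul_zero, add_zero]
  exact ⟨x', hbound, hcard, key v₁ hk1, key v₂ hk2⟩

lemma exists_semifrac (v₁ v₂ : α → ℝ) (M : Finset α) :
    ∃ x : α → ℝ, (∀ j, 0 ≤ x j ∧ x j ≤ 1) ∧
      (M.filter (fun j => x j ≠ 0 ∧ x j ≠ 1)).card ≤ 2 ∧
      (∑ j ∈ M, v₁ j * x j) = (∑ j ∈ M, v₁ j) / 2 ∧
      (∑ j ∈ M, v₂ j * x j) = (∑ j ∈ M, v₂ j) / 2 := by
  classical
  induction M using Finset.induction_on with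
  | empty =>
    exact ⟨fun _ => 0, fun j => ⟨le_refl _, zero_le_one⟩, by simp, by simp, by simp⟩
  | @insert z M hz ih =>
    obtain ⟨x, hx, hcard, h1, h2⟩ := ih
    set x' : α → ℝ := Function.update x z (1/2) with hx'def
    have hx'z : x' z = 1/2 := by rw [hx'def]; simp
    have hx'M : ∀ j ∈ M, x' j = x j := by
      intro j hj
      rw [hx'def]
      have : j ≠ z := fun h => hz (h ▸ hj)
      exact Function.update_of_ne this _ _
    have hb : ∀ j, 0 ≤ x' j ∧ x' j ≤ 1 := by
      intro j
      by_cases h : j = z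
      · rw [h, hx'z]; norm_num
      · rw [hx'def, Function.update_of_ne h]; exact hx j
    have hsum : ∀ (v : α → ℝ), (∑ j ∈ M, v j * x j) = (∑ j ∈ M, v j) / 2 →
        (∑ j ∈ insert z M, v j * x' j) = (∑ j ∈ insert z M, v j) / 2 := by
      intro v hv
      rw [Finset.sum_insert hz, Finset.sum_insert hz, hx'z]
      rw [Finset.sum_congr rfl (fun j hj => by rw [hx'M j hj] : ∀ j ∈ M, v j * x' j = v j * x j)]
      rw [hv]; ring
    have hfilt : (insert z M).filter (fun j => x' j ≠ 0 ∧ x' j ≠ 1) ⊆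
        insert z (M.filter (fun j => x j ≠ 0 ∧ x j ≠ 1)) := by
      intro j hj
      rw [Finset.mem_filter] at hj
      obtain ⟨hjM, hjp⟩ := hj
      rw [Finset.mem_insert] at hjM
      rcases hjM with h | h
      · rw [h]; exact Finset.mem_insert_self _ _
      · refine Finset.mem_insert_of_mem ?_
        rw [Finset.mem_filter]
        rw [hx'M j h] at hjp
        exact ⟨h, hjp⟩
    have hcard' : ((insert z M).filter (fun j => x' j ≠ 0 ∧ x' j ≠ 1)).card ≤ 3 := by
      calc ((insert z M).filter (fun j => x' j ≠ 0 ∧ x' j ≠ 1)).card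
          ≤ (insert z (M.filter (fun j => x j ≠ 0 ∧ x j ≠ 1))).card := Finset.card_le_card hfilt
        _ ≤ (M.filter (fun j => x j ≠ 0 ∧ x j ≠ 1)).card + 1 := Finset.card_insert_le _ _
        _ ≤ 3 := by omega
    by_cases h3 : ((insert z M).filter (fun j => x' j ≠ 0 ∧ x' j ≠ 1)).card ≤ 2
    · exact ⟨x', hb, h3, hsum v₁ h1, hsum v₂ h2⟩
    · have hc3 : ((insert z M).filter (fun j => x' j ≠ 0 ∧ x' j ≠ 1)).card = 3 := by omega
      obtain ⟨x'', hb'', hcard'', hs1, hs2⟩ := descent v₁ v₂ (insert z M) x' hb hc3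
      exact ⟨x'', hb'', hcard'', by rw [hs1]; exact hsum v₁ h1, by rw [hs2]; exact hsum v₂ h2⟩

lemma core_partition (v₁ v₂ : α → ℝ) (M : Finset α) (y : α) (hy : y ∈ M)
    (hv₁ : ∀ x, 0 ≤ v₁ x) (hv₂ : ∀ x, 0 ≤ v₂ x)
    (hfav₁ : ∀ x ∈ M, v₁ x ≤ v₁ y) (hfav₂ : ∀ x ∈ M, v₂ x ≤ v₂ y)
    (hM : 2 ≤ M.card) :
    ∃ S ⊆ M, |2 * (∑ j ∈ S, v₁ j) - ∑ j ∈ M, v₁ j| ≤ v₁ y ∧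
      |2 * (∑ j ∈ S, v₂ j) - ∑ j ∈ M, v₂ j| ≤ v₂ y := by
  classical
  obtain ⟨x, hx, hcard, h1, h2⟩ := exists_semifrac v₁ v₂ M
  have hFM : M.filter (fun j => x j ≠ 0 ∧ x j ≠ 1) ⊆ M := Finset.filter_subset _ _
  obtain ⟨P, hFP, hPM, hP2⟩ := Finset.exists_subsuperset_card_eq hFM hcard hM
  obtain ⟨a, b, hab, hPab⟩ := Finset.card_eq_two.mp hP2
  have haM : a ∈ M := hPM (by rw [hPab]; simp)
  have hbM : b ∈ M := hPM (by rw [hPab]; simp)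
  have habM : ({a, b} : Finset α) ⊆ M := by rw [← hPab]; exact hPM
  set S₀ := (M \ {a, b}).filter (fun j => x j = 1) with hS₀def
  have hS₀M : S₀ ⊆ M := (Finset.filter_subset _ _).trans (Finset.sdiff_subset)
  have haS₀ : a ∉ S₀ := by
    intro h
    have := (Finset.mem_sdiff.mp (Finset.mem_filter.mp h).1).2
    exact this (by simp)
  have hbS₀ : b ∉ S₀ := by
    intro h
    have := (Finset.mem_sdiff.mp (Finset.mem_filter.mp h).1).2
    exact this (by simp)
  -- key sum identity
  have key : ∀ v : α → ℝ, (∑ j ∈ M, v j * x j)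
      = (∑ j ∈ S₀, v j) + v a * x a + v b * x b := by
    intro v
    have hsplit : (∑ j ∈ M, v j * x j)
        = (∑ j ∈ M \ {a, b}, v j * x j) + ∑ j ∈ ({a, b} : Finset α), v j * x j := by
      rw [Finset.sum_sdiff habM]
    rw [hsplit, Finset.sum_pair hab]
    have hint : ∀ j ∈ M \ {a, b}, v j * x j = if x j = 1 then v j else 0 := by
      intro j hj
      obtain ⟨hjM, hjP⟩ := Finset.mem_sdiff.mp hj
      have hjF : j ∉ M.filter (fun j => x j ≠ 0 ∧ x j ≠ 1) := by
        intro h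
        exact hjP (by rw [← hPab]; exact hFP h)
      rw [Finset.mem_filter] at hjF
      push_neg at hjF
      rcases Classical.em (x j = 0) with h0 | h0
      · rw [h0, mul_zero, if_neg (by norm_num : (0:ℝ) ≠ 1)]
      · have h1' : x j = 1 := hjF hjM h0
        rw [h1', mul_one, if_pos rfl]
    rw [Finset.sum_congr rfl hint, Finset.sum_filter]
    ring
  obtain ⟨ea, eb, hea, heb, hr1, hr2⟩ := round_two (x a) (x b) (v₁ a) (v₁ b) (v₂ a) (v₂ b)
    (hx a).1 (hx a).2 (hx b).1 (hx b).2 (hv₁ a) (hv₁ b) (hv₂ a) (hv₂ b)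
  have hmax1 : max (v₁ a) (v₁ b) ≤ v₁ y := max_le (hfav₁ a haM) (hfav₁ b hbM)
  have hmax2 : max (v₂ a) (v₂ b) ≤ v₂ y := max_le (hfav₂ a haM) (hfav₂ b hbM)
  -- main finishing step
  have main : ∀ (S : Finset α) (ia ib : ℝ), S ⊆ M →
      ((∑ j ∈ S, v₁ j) = (∑ j ∈ S₀, v₁ j) + ia * v₁ a + ib * v₁ b) →
      ((∑ j ∈ S, v₂ j) = (∑ j ∈ S₀, v₂ j) + ia * v₂ a + ib * v₂ b) →
      ea = ia - x a → eb = ib - x b →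
      ∃ S ⊆ M, |2 * (∑ j ∈ S, v₁ j) - ∑ j ∈ M, v₁ j| ≤ v₁ y ∧
        |2 * (∑ j ∈ S, v₂ j) - ∑ j ∈ M, v₂ j| ≤ v₂ y := by
    intro S ia ib hSM hs1 hs2 hea' heb'
    have hM1 : (∑ j ∈ M, v₁ j) = 2 * ((∑ j ∈ S₀, v₁ j) + v₁ a * x a + v₁ b * x b) := by
      rw [← key v₁]; linarith [h1, key v₁]
    have hM2 : (∑ j ∈ M, v₂ j) = 2 * ((∑ j ∈ S₀, v₂ j) + v₂ a * x a + v₂ b * x b) := by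
      rw [← key v₂]; linarith [h2, key v₂]
    have d1 : 2 * (∑ j ∈ S, v₁ j) - (∑ j ∈ M, v₁ j) = 2 * (ea * v₁ a + eb * v₁ b) := by
      linear_combination 2 * hs1 - hM1 - 2 * v₁ a * hea' - 2 * v₁ b * heb'
    have d2 : 2 * (∑ j ∈ S, v₂ j) - (∑ j ∈ M, v₂ j) = 2 * (ea * v₂ a + eb * v₂ b) := by
      linear_combination 2 * hs2 - hM2 - 2 * v₂ a * hea' - 2 * v₂ b * heb'
    refine ⟨S, hSM, ?_, ?_⟩
    · rw [d1]
      have : |2 * (ea * v₁ a + eb * v₁ b)| = 2 * |ea * v₁ a + eb * v₁ b| := by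
        rw [abs_mul, abs_two]
      rw [this]
      linarith [hr1, hmax1]
    · rw [d2]
      have : |2 * (ea * v₂ a + eb * v₂ b)| = 2 * |ea * v₂ a + eb * v₂ b| := by
        rw [abs_mul, abs_two]
      rw [this]
      linarith [hr2, hmax2]
  have hainb : a ∉ insert b S₀ := by simp [hab, haS₀]
  rcases hea with hea' | hea' <;> rcases heb with heb' | heb'
  · -- both up
    refine main (insert a (insert b S₀)) 1 1
      (Finset.insert_subset haM (Finset.insert_subset hbM hS₀M)) ?_ ?_
      (by rw [hea']; try ring) (by rw [heb']; try ring)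
    · rw [Finset.sum_insert hainb, Finset.sum_insert hbS₀]; ring
    · rw [Finset.sum_insert hainb, Finset.sum_insert hbS₀]; ring
  · -- a up, b down
    refine main (insert a S₀) 1 0 (Finset.insert_subset haM hS₀M) ?_ ?_
      (by rw [hea']; try ring) (by rw [heb']; try ring)
    · rw [Finset.sum_insert haS₀]; ring
    · rw [Finset.sum_insert haS₀]; ring
  · -- a down, b up
    refine main (insert b S₀) 0 1 (Finset.insert_subset hbM hS₀M) ?_ ?_
      (by rw [hea']; try ring) (by rw [heb']; try ring)
    · rw [Finset.sum_insert hbS₀]; ring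
    · rw [Finset.sum_insert hbS₀]; ring
  · -- both down
    refine main S₀ 0 0 hS₀M ?_ ?_ (by rw [hea']; try ring) (by rw [heb']; try ring)
    · ring
    · ring

lemma bestGood_mem [Nonempty α] (v : α → ℝ) (S : Finset α) (h : S.Nonempty) :
    bestGood v S ∈ S := by
  rw [bestGood, dif_pos h]
  exact (S.exists_max_image v h).choose_spec.1

lemma TPS_two_le [Nonempty α] (v : α → ℝ) (M : Finset α) :
    TPS v 2 M ≤ (∑ x ∈ M, v x) / 2 := by
  have : TPS v 2 M = min ((∑ x ∈ M, v x) / ((0 + 2 : ℕ) : ℝ))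
      (TPS v 1 (M.erase (bestGood v M))) := rfl
  rw [this]
  refine (min_le_left _ _).trans ?_
  norm_num

lemma TPS_singleton [Nonempty α] (v : α → ℝ) (y : α) : TPS v 2 {y} ≤ 0 := by
  have h : TPS v 2 {y} = min ((∑ x ∈ ({y} : Finset α), v x) / ((0 + 2 : ℕ) : ℝ))
      (TPS v 1 (({y} : Finset α).erase (bestGood v {y}))) := rfl
  have hb : bestGood v {y} = y := by
    have := bestGood_mem v {y} (Finset.singleton_nonempty y)
    simpa using this
  rw [h, hb]
  have : (({y} : Finset α).erase y) = ∅ := by simp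
  rw [this]
  have h1 : TPS v 1 (∅ : Finset α) = 0 := by
    show (∑ x ∈ (∅ : Finset α), v x) = 0
    simp
  refine (min_le_right _ _).trans ?_
  rw [h1]

/-- Two-agent easy case (all items small): if the agents share a favorite good `y`
and every good is worth at most `(2/3)·TPS₂(vᵢ)` to each agent `i`, then `M` can be
partitioned into two bundles each worth at least `(2/3)·TPS₂(vᵢ)` to both agents,
where moreover for each agent the two bundle values differ by at most the value of a
single good. -/
theorem two_agent_all_small [Nonempty α] (v₁ v₂ : α → ℝ) (M : Finset α) (y : α)
    (hy : y ∈ M) (hv₁ : ∀ x, 0 ≤ v₁ x) (hv₂ : ∀ x, 0 ≤ v₂ x)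
    (hfav₁ : ∀ x ∈ M, v₁ x ≤ v₁ y) (hfav₂ : ∀ x ∈ M, v₂ x ≤ v₂ y)
    (hsmall₁ : ∀ x ∈ M, v₁ x ≤ (2 / 3) * TPS v₁ 2 M)
    (hsmall₂ : ∀ x ∈ M, v₂ x ≤ (2 / 3) * TPS v₂ 2 M) :
    ∃ S ⊆ M,
      ((2 / 3) * TPS v₁ 2 M ≤ ∑ x ∈ S, v₁ x ∧
       (2 / 3) * TPS v₁ 2 M ≤ ∑ x ∈ M \ S, v₁ x ∧
       (2 / 3) * TPS v₂ 2 M ≤ ∑ x ∈ S, v₂ x ∧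
       (2 / 3) * TPS v₂ 2 M ≤ ∑ x ∈ M \ S, v₂ x) ∧
      (∃ g ∈ M, |(∑ x ∈ S, v₁ x) - ∑ x ∈ M \ S, v₁ x| ≤ v₁ g) ∧
      (∃ g ∈ M, |(∑ x ∈ S, v₂ x) - ∑ x ∈ M \ S, v₂ x| ≤ v₂ g) := by
  classical
  have hy₁ : v₁ y ≤ (2/3) * TPS v₁ 2 M := hsmall₁ y hy
  have hy₂ : v₂ y ≤ (2/3) * TPS v₂ 2 M := hsmall₂ y hy
  rcases lt_or_ge M.card 2 with hMc | hMc
  · -- M = {y}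
    have hM1 : M.card = 1 := by
      have : 1 ≤ M.card := Finset.card_pos.mpr ⟨y, hy⟩
      omega
    obtain ⟨z, hz⟩ := Finset.card_eq_one.mp hM1
    have hzy : M = {y} := by
      rw [hz] at hy ⊢
      rw [Finset.mem_singleton] at hy
      rw [hy]
    subst hzy
    have hT1 : TPS v₁ 2 {y} ≤ 0 := TPS_singleton v₁ y
    have hT2 : TPS v₂ 2 {y} ≤ 0 := TPS_singleton v₂ y
    refine ⟨∅, Finset.empty_subset _, ⟨?_, ?_, ?_, ?_⟩, ⟨y, hy, ?_⟩, ⟨y, hy, ?_⟩⟩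
    · simpa using by linarith
    · rw [Finset.sdiff_empty, Finset.sum_singleton]
      linarith [hv₁ y]
    · simpa using by linarith
    · rw [Finset.sdiff_empty, Finset.sum_singleton]
      linarith [hv₂ y]
    · rw [Finset.sdiff_empty, Finset.sum_singleton, Finset.sum_empty, zero_sub, abs_neg,
        abs_of_nonneg (hv₁ y)]
    · rw [Finset.sdiff_empty, Finset.sum_singleton, Finset.sum_empty, zero_sub, abs_neg,
        abs_of_nonneg (hv₂ y)]
  · obtain ⟨S, hSM, hd1, hd2⟩ := core_partition v₁ v₂ M y hy hv₁ hv₂ hfav₁ hfav₂ hMc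
    have hT1 : TPS v₁ 2 M ≤ (∑ x ∈ M, v₁ x) / 2 := TPS_two_le v₁ M
    have hT2 : TPS v₂ 2 M ≤ (∑ x ∈ M, v₂ x) / 2 := TPS_two_le v₂ M
    have hsd1 : (∑ x ∈ M \ S, v₁ x) = (∑ x ∈ M, v₁ x) - ∑ x ∈ S, v₁ x :=
      Finset.sum_sdiff_eq_sub hSM
    have hsd2 : (∑ x ∈ M \ S, v₂ x) = (∑ x ∈ M, v₂ x) - ∑ x ∈ S, v₂ x :=
      Finset.sum_sdiff_eq_sub hSM
    obtain ⟨ha1, hb1⟩ := abs_le.mp hd1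
    obtain ⟨ha2, hb2⟩ := abs_le.mp hd2
    refine ⟨S, hSM, ⟨by linarith, ?_, by linarith, ?_⟩, ⟨y, hy, ?_⟩, ⟨y, hy, ?_⟩⟩
    · rw [hsd1]; linarith
    · rw [hsd2]; linarith
    · rw [hsd1]
      have he : (∑ x ∈ S, v₁ x) - ((∑ x ∈ M, v₁ x) - ∑ x ∈ S, v₁ x)
          = 2 * (∑ x ∈ S, v₁ x) - ∑ x ∈ M, v₁ x := by ring
      rw [he]
      exact hd1
    · rw [hsd2]
      have he : (∑ x ∈ S, v₂ x) - ((∑ x ∈ M, v₂ x) - ∑ x ∈ S, v₂ x)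
          = 2 * (∑ x ∈ S, v₂ x) - ∑ x ∈ M, v₂ x := by ring
      rw [he]
      exact hd2
end
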